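/- For any finite point set P ⊂ ℝ^d, the Gabriel graph of P with each edge pq weighted ‖p − q‖² is a 1-spanner of the edge-squared metric: for all a, b ∈ P, the shortest-path distance in the Gabriel graph with squared-Euclidean weights equals d₂(a,b). -/

import Mathlib

open scoped BigOperators
open MeasureTheory

noncomputable section

/-- Points of `ℝ^d`. -/
abbrev Pt (d : ℕ) : Type := EuclideanSpace ℝ (Fin d)

/-- The edge-squared metric on a point set `P ⊆ ℝ^d`: the infimum over finite chains of points
of `P` from `a` to `b` of the sum of squared Euclidean lengths of the steps. -/
noncomputable def edgeSq {d : ℕ} (P : Set (Pt d)) (a b : Pt d) : ℝ :=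
  sInf {c : ℝ | ∃ (k : ℕ) (p : Fin (k + 1) → Pt d), p 0 = a ∧ p (Fin.last k) = b ∧
    (∀ i, p i ∈ P) ∧ c = ∑ i : Fin k, ‖p i.succ - p i.castSucc‖ ^ 2}


/-- Shortest-path distance in a weighted graph given by an adjacency relation `adj` and edge
weights `w`. -/
noncomputable def graphDist {V : Type*} (adj : V → V → Prop) (w : V → V → ℝ) (u v : V) : ℝ :=
  sInf {c : ℝ | ∃ (k : ℕ) (q : Fin (k + 1) → V), q 0 = u ∧ q (Fin.last k) = v ∧
    (∀ i : Fin k, adj (q i.castSucc) (q i.succ)) ∧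
    c = ∑ i : Fin k, w (q i.castSucc) (q i.succ)}

/-- The Gabriel graph on `P`: distinct `p, q ∈ P` are adjacent iff the open ball whose diameter
is the segment `pq` (center the midpoint, radius `‖p - q‖ / 2`) contains no other point of `P`. -/
def GabrielAdj {d : ℕ} (P : Set (Pt d)) (p q : Pt d) : Prop :=
  p ∈ P ∧ q ∈ P ∧ p ≠ q ∧
    ∀ x ∈ P, x ≠ p → x ≠ q → ¬ dist x (midpoint ℝ p q) < ‖p - q‖ / 2

/-
If a point `x ∈ P` lies in the open ball with diameter `ab`, Apollonius' theorem gives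
`‖a - x‖² + ‖x - b‖² < ‖a - b‖²`: the detour through `x` is cheaper than the step `ab` and consists
of two strictly shorter steps. Since `P` has finitely many step lengths, induction on the length
replaces every step between points of `P` by a Gabriel path of no larger cost, so chains in `P`
and paths in the Gabriel graph have the same infimal cost.
-/

section Walks

variable {V : Type*} {adj r : V → V → Prop} {w : V → V → ℝ} {u v x : V} {c c' : ℝ}

-- `graphDist adj w u v` is by definition `sInf (walkCosts adj w u v)`.
def walkCosts (adj : V → V → Prop) (w : V → V → ℝ) (u v : V) : Set ℝ :=
  {c : ℝ | ∃ (k : ℕ) (q : Fin (k + 1) → V), q 0 = u ∧ q (Fin.last k) = v ∧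
    (∀ i : Fin k, adj (q i.castSucc) (q i.succ)) ∧
    c = ∑ i : Fin k, w (q i.castSucc) (q i.succ)}

theorem zero_mem_walkCosts (u : V) : (0 : ℝ) ∈ walkCosts adj w u u :=
  ⟨0, fun _ => u, rfl, rfl, finZeroElim, by simp⟩

theorem add_mem_walkCosts_of_adj (h : adj u v) (hc : c ∈ walkCosts adj w v x) :
    w u v + c ∈ walkCosts adj w u x := by
  obtain ⟨k, q, rfl, rfl, hq, rfl⟩ := hc
  refine ⟨k + 1, Fin.cons u q, rfl, rfl, Fin.cases h hq, ?_⟩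
  rw [Fin.sum_univ_succ]
  rfl

theorem add_mem_walkCosts (hc : c ∈ walkCosts adj w u v) (hc' : c' ∈ walkCosts adj w v x) :
    c + c' ∈ walkCosts adj w u x := by
  obtain ⟨k, q, rfl, rfl, hq, rfl⟩ := hc
  induction k with
  | zero => simpa using hc'
  | succ k ih =>
    rw [Fin.sum_univ_succ, add_assoc (G := ℝ)]
    exact add_mem_walkCosts_of_adj (hq 0) (ih (fun i => q i.succ) hc' fun i => hq i.succ)

theorem walkCosts_mono (h : ∀ x y, adj x y → r x y) :
    walkCosts adj w u v ⊆ walkCosts r w u v := by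
  rintro c ⟨k, q, h0, hk, hq, rfl⟩
  exact ⟨k, q, h0, hk, fun i => h _ _ (hq i), rfl⟩

theorem exists_mem_walkCosts_le (h : ∀ x y, r x y → ∃ c ∈ walkCosts adj w x y, c ≤ w x y)
    (hc : c ∈ walkCosts r w u v) : ∃ c' ∈ walkCosts adj w u v, c' ≤ c := by
  obtain ⟨k, q, rfl, rfl, hq, rfl⟩ := hc
  induction k with
  | zero => exact ⟨0, zero_mem_walkCosts _, by simp⟩
  | succ k ih =>
    obtain ⟨c₁, hc₁, hle₁⟩ := h _ _ (hq 0)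
    obtain ⟨c₂, hc₂, hle₂⟩ := ih (fun i => q i.succ) (fun i => hq i.succ)
    refine ⟨c₁ + c₂, add_mem_walkCosts hc₁ hc₂, ?_⟩
    rw [Fin.sum_univ_succ]
    exact add_le_add hle₁ hle₂

theorem graphDist_eq_of_forall_exists_le (hle : ∀ x y, adj x y → r x y)
    (h : ∀ x y, r x y → ∃ c ∈ walkCosts adj w x y, c ≤ w x y) :
    graphDist adj w u v = graphDist r w u v :=
  csInf_eq_csInf_of_forall_exists_le (fun c hc => ⟨c, walkCosts_mono hle hc, le_rfl⟩)
    fun _ hc => exists_mem_walkCosts_le h hc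

end Walks

theorem norm_sub_sq_add_norm_sub_sq_lt_of_dist_midpoint_lt {E : Type*} [NormedAddCommGroup E]
    [InnerProductSpace ℝ E] {a b x : E} (h : dist x (midpoint ℝ a b) < ‖a - b‖ / 2) :
    ‖a - x‖ ^ 2 + ‖x - b‖ ^ 2 < ‖a - b‖ ^ 2 := by
  have apollonius :=
    EuclideanGeometry.dist_sq_add_dist_sq_eq_two_mul_dist_midpoint_sq_add_half_dist_sq x a b
  rw [dist_eq_norm x a, norm_sub_rev, dist_eq_norm x b, dist_eq_norm a b] at apollonius
  nlinarith [dist_nonneg (x := x) (y := midpoint ℝ a b)]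

section Gabriel

variable {d : ℕ} {P : Set (Pt d)} {a b : Pt d}

theorem exists_gabrielAdj_walk_le (hP : P.Finite) (ha : a ∈ P) (hb : b ∈ P) :
    ∃ c ∈ walkCosts (GabrielAdj P) (fun u v => ‖u - v‖ ^ 2) a b, c ≤ ‖a - b‖ ^ 2 := by
  have hwf :
      (P ×ˢ P).WellFoundedOn (Function.onFun (· < ·) fun p : Pt d × Pt d => ‖p.1 - p.2‖) :=
    Set.wellFoundedOn_image.mp ((hP.prod hP).image _).wellFoundedOn
  refine hwf.induction (P := fun p => ∃ c ∈ walkCosts (GabrielAdj P) (fun u v => ‖u - v‖ ^ 2)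
    p.1 p.2, c ≤ ‖p.1 - p.2‖ ^ 2) (Set.mk_mem_prod ha hb) ?_
  rintro ⟨a, b⟩ ⟨ha, hb⟩ ih
  by_cases hab : a = b
  · subst hab
    exact ⟨0, zero_mem_walkCosts a, by positivity⟩
  by_cases hG : GabrielAdj P a b
  · exact ⟨‖a - b‖ ^ 2 + 0, add_mem_walkCosts_of_adj hG (zero_mem_walkCosts b), by simp⟩
  obtain ⟨x, hx, -, -, hxab⟩ :
      ∃ x ∈ P, x ≠ a ∧ x ≠ b ∧ dist x (midpoint ℝ a b) < ‖a - b‖ / 2 := by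
    simpa [GabrielAdj, ha, hb, hab] using hG
  have hsum := norm_sub_sq_add_norm_sub_sq_lt_of_dist_midpoint_lt hxab
  have hax : ‖a - x‖ < ‖a - b‖ :=
    lt_of_pow_lt_pow_left₀ 2 (norm_nonneg _) (by nlinarith [sq_nonneg ‖x - b‖])
  have hxb : ‖x - b‖ < ‖a - b‖ :=
    lt_of_pow_lt_pow_left₀ 2 (norm_nonneg _) (by nlinarith [sq_nonneg ‖a - x‖])
  obtain ⟨c₁, hc₁, hle₁⟩ := ih (a, x) ⟨ha, hx⟩ hax
  obtain ⟨c₂, hc₂, hle₂⟩ := ih (x, b) ⟨hx, hb⟩ hxb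
  exact ⟨c₁ + c₂, add_mem_walkCosts hc₁ hc₂, by linarith⟩

theorem edgeSq_eq_graphDist (ha : a ∈ P) :
    edgeSq P a b = graphDist (fun x y => x ∈ P ∧ y ∈ P) (fun u v => ‖u - v‖ ^ 2) a b := by
  refine congrArg sInf (Set.ext fun c => exists_congr fun k => exists_congr fun p => ?_)
  have hcost : ∑ i : Fin k, ‖p i.succ - p i.castSucc‖ ^ 2 =
      ∑ i : Fin k, ‖p i.castSucc - p i.succ‖ ^ 2 :=
    Finset.sum_congr rfl fun i _ => by rw [norm_sub_rev]
  rw [hcost]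
  constructor
  · rintro ⟨h0, hk, hp, rfl⟩
    exact ⟨h0, hk, fun i => ⟨hp _, hp _⟩, rfl⟩
  · rintro ⟨rfl, hk, hp, rfl⟩
    exact ⟨rfl, hk, Fin.cases ha fun i => (hp i).2, rfl⟩

end Gabriel

theorem gabriel_one_spanner_edgeSq (d : ℕ) (P : Set (Pt d)) (hP : P.Finite)
    (a b : Pt d) (ha : a ∈ P) :
    graphDist (GabrielAdj P) (fun u v => ‖u - v‖ ^ 2) a b = edgeSq P a b := by
  rw [edgeSq_eq_graphDist ha]
  exact graphDist_eq_of_forall_exists_le (fun _ _ h => ⟨h.1, h.2.1⟩)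
    fun _ _ h => exists_gabrielAdj_walk_le hP h.1 h.2
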